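/- Let p > 2 and, for each k ∈ ℕ ∪ {0}, let δ_k, a_k be the numbers defined by the bubble recurrences, and set E_k = 2·a_k/δ_k^{p−1}. Then for every k ∈ ℕ ∪ {0}: δ_k^{p−1}·Σ_{i=0}^{k} E_i = 2 + a_k. -/

import Mathlib

open Filter

/-- The bubble sequences `(a_k)`, `(δ_k)` for `p > 2`: `a₀ = 2`, `δ₀ = 1`, and for `k ≥ 1`,
`δ_k ∈ (0, δ_{k-1})` solves `(2p/(2+a_{k-1}))(1 - δ_k/δ_{k-1}) - 1 + (δ_k/δ_{k-1})^p = 0`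
and `a_k = 2 - (δ_k/δ_{k-1})^{p-1} (2 + a_{k-1}) ∈ (0,2)`. -/
def IsBubbleSeq (p : ℝ) (a δ : ℕ → ℝ) : Prop :=
  a 0 = 2 ∧ δ 0 = 1 ∧
  ∀ k : ℕ,
    δ (k + 1) ∈ Set.Ioo 0 (δ k) ∧
    2 * p / (2 + a k) * (1 - δ (k + 1) / δ k) - 1 + (δ (k + 1) / δ k) ^ p = 0 ∧
    a (k + 1) = 2 - (δ (k + 1) / δ k) ^ (p - 1) * (2 + a k) ∧
    a (k + 1) ∈ Set.Ioo (0:ℝ) 2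

/-!
Writing `S_k = (2 + a_k) / δ_k^{p-1}`, the recurrence for `a_{k+1}` says exactly that
`δ_{k+1}^{p-1} S_k = 2 - a_{k+1}`, hence `S_k + E_{k+1} = (2 - a_{k+1} + 2 a_{k+1}) / δ_{k+1}^{p-1}
= S_{k+1}`. Since `S_0 = 4 = E_0`, the partial sums of `E` are the `S_k`.
-/

namespace IsBubbleSeq

variable {p : ℝ} {a δ : ℕ → ℝ}

theorem delta_pos (hb : IsBubbleSeq p a δ) (k : ℕ) : 0 < δ k := by
  cases k with
  | zero => simp [hb.2.1]
  | succ k => exact (hb.2.2 k).1.1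

theorem rpow_mul_div_rpow_eq_two_sub (hb : IsBubbleSeq p a δ) (k : ℕ) :
    δ (k + 1) ^ (p - 1) * ((2 + a k) / δ k ^ (p - 1)) = 2 - a (k + 1) := by
  rw [(hb.2.2 k).2.2.1, Real.div_rpow (hb.delta_pos (k + 1)).le (hb.delta_pos k).le]
  ring

theorem sum_range_succ_div_rpow_eq (hb : IsBubbleSeq p a δ) (k : ℕ) :
    ∑ i ∈ Finset.range (k + 1), 2 * a i / δ i ^ (p - 1) = (2 + a k) / δ k ^ (p - 1) := by
  induction k with
  | zero => norm_num [hb.1, hb.2.1]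
  | succ k ih =>
    have hpow : δ (k + 1) ^ (p - 1) ≠ 0 := (Real.rpow_pos_of_pos (hb.delta_pos _) _).ne'
    rw [Finset.sum_range_succ, ih, eq_div_iff hpow, add_mul, div_mul_cancel₀ _ hpow, mul_comm,
      hb.rpow_mul_div_rpow_eq_two_sub k]
    ring

end IsBubbleSeq

theorem statement8 (p : ℝ) (a δ : ℕ → ℝ) (hb : IsBubbleSeq p a δ)
    (E : ℕ → ℝ) (hE : ∀ k, E k = 2 * a k / δ k ^ (p - 1)) :
    ∀ k : ℕ, δ k ^ (p - 1) * ∑ i ∈ Finset.range (k + 1), E i = 2 + a k := by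
  intro k
  simp_rw [hE, hb.sum_range_succ_div_rpow_eq k]
  exact mul_div_cancel₀ _ (Real.rpow_pos_of_pos (hb.delta_pos k) _).ne'
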